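/- Let T > 0, let B : ℝ → ℝ be continuous, and let D > 0. If z : [0, T] → ℝ is continuous on [0, T], differentiable at every t ∈ [0, T] with z′(t) = B(t)·z(t) + z(t)², and satisfies z(T) = D, then for every t ∈ [0, T], z(t) = D · ( exp(∫_t^T B(s) ds) + D·∫_t^T exp(∫_t^s B(r) dr) ds )^{−1}. In particular the terminal value problem for the Riccati equation has a unique solution on [0, T]. -/

import Mathlib

open Set intervalIntegral

/-!
The closed form is `D / w` with `w = riccatiDenominator B D T`. Writing
`exp (∫ₜˢ B) = exp (-∫₀ᵗ B) · exp (∫₀ˢ B)` shows that `w` solves the linear equation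
`w' = -B w - D` with `w T = 1`, and `w > 0` on `(-∞, T]`, so `D / w` solves the same terminal
value problem as `z`. The Riccati field `x ↦ B t · x + x²` is Lipschitz on every ball, uniformly
for `t ∈ [0, T]`, and both solutions are bounded on `[0, T]`, so uniqueness for Lipschitz ODEs,
run backward from `T`, gives `z = D / w`.
-/

theorem lipschitzOnWith_mul_add_sq {b M : ℝ} (hb : |b| ≤ M) (R : ℝ) :
    LipschitzOnWith (M + 2 * R).toNNReal (fun x => b * x + x ^ 2) (Metric.closedBall 0 R) := by
  refine LipschitzOnWith.of_dist_le' fun x hx y hy => ?_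
  rw [mem_closedBall_zero_iff, Real.norm_eq_abs] at hx hy
  have hxy : |b + x + y| ≤ M + 2 * R := by
    calc |b + x + y| ≤ |b| + |x| + |y| := abs_add_three b x y
      _ ≤ M + 2 * R := by linarith
  calc dist (b * x + x ^ 2) (b * y + y ^ 2) = |b + x + y| * dist x y := by
        rw [Real.dist_eq, Real.dist_eq, ← abs_mul]; congr 1; ring
    _ ≤ (M + 2 * R) * dist x y := by gcongr

theorem riccati_eqOn_of_eq_right {B f g : ℝ → ℝ} {a b : ℝ} (hB : ContinuousOn B (Icc a b))
    (hf : ContinuousOn f (Icc a b)) (hf' : ∀ t ∈ Icc a b, HasDerivAt f (B t * f t + f t ^ 2) t)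
    (hg : ContinuousOn g (Icc a b)) (hg' : ∀ t ∈ Icc a b, HasDerivAt g (B t * g t + g t ^ 2) t)
    (hfg : f b = g b) : EqOn f g (Icc a b) := by
  obtain ⟨M, hM⟩ := isCompact_Icc.exists_bound_of_continuousOn hB
  obtain ⟨Rf, hRf⟩ := isCompact_Icc.exists_bound_of_continuousOn hf
  obtain ⟨Rg, hRg⟩ := isCompact_Icc.exists_bound_of_continuousOn hg
  have hsub : Ioc a b ⊆ Icc a b := Ioc_subset_Icc_self
  refine ODE_solution_unique_of_mem_Icc_left (v := fun t x => B t * x + x ^ 2)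
    (s := fun _ => Metric.closedBall 0 (max Rf Rg))
    (fun t ht => lipschitzOnWith_mul_add_sq (hM t (hsub ht)) _)
    hf (fun t ht => (hf' t (hsub ht)).hasDerivWithinAt) (fun t ht => ?_)
    hg (fun t ht => (hg' t (hsub ht)).hasDerivWithinAt) (fun t ht => ?_) hfg
  · exact mem_closedBall_zero_iff.2 ((hRf t (hsub ht)).trans (le_max_left _ _))
  · exact mem_closedBall_zero_iff.2 ((hRg t (hsub ht)).trans (le_max_right _ _))

theorem HasDerivAt.const_mul_inv_riccati {w : ℝ → ℝ} {b D t : ℝ}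
    (hw : HasDerivAt w (-(b * w t) - D) t) (hwt : w t ≠ 0) :
    HasDerivAt (fun u => D * (w u)⁻¹) (b * (D * (w t)⁻¹) + (D * (w t)⁻¹) ^ 2) t := by
  refine ((hw.inv hwt).const_mul D).congr_deriv ?_
  field_simp
  ring

noncomputable def riccatiDenominator (B : ℝ → ℝ) (D T t : ℝ) : ℝ :=
  Real.exp (∫ s in t..T, B s) + D * ∫ s in t..T, Real.exp (∫ r in t..s, B r)

section riccatiDenominator

variable {B : ℝ → ℝ} {D T : ℝ}

@[simp]
theorem riccatiDenominator_self : riccatiDenominator B D T T = 1 := by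
  simp [riccatiDenominator]

theorem riccatiDenominator_pos (hD : 0 ≤ D) {t : ℝ} (ht : t ≤ T) : 0 < riccatiDenominator B D T t :=
  add_pos_of_pos_of_nonneg (Real.exp_pos _)
    (mul_nonneg hD (integral_nonneg ht fun _ _ => (Real.exp_pos _).le))

theorem riccatiDenominator_eq_exp_neg_mul (hB : Continuous B) (t : ℝ) :
    riccatiDenominator B D T t = Real.exp (-∫ s in (0 : ℝ)..t, B s) *
      (Real.exp (∫ s in (0 : ℝ)..T, B s) + D * ∫ s in t..T, Real.exp (∫ r in (0 : ℝ)..s, B r)) := by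
  have hsplit (s : ℝ) : Real.exp (∫ r in t..s, B r) =
      Real.exp (-∫ r in (0 : ℝ)..t, B r) * Real.exp (∫ r in (0 : ℝ)..s, B r) := by
    rw [← Real.exp_add, neg_add_eq_sub,
      integral_interval_sub_left (hB.intervalIntegrable _ _) (hB.intervalIntegrable _ _)]
  simp only [riccatiDenominator, hsplit, integral_const_mul]
  ring

theorem hasDerivAt_riccatiDenominator (hB : Continuous B) (t : ℝ) :
    HasDerivAt (riccatiDenominator B D T) (-(B t * riccatiDenominator B D T t) - D) t := by
  have hF : HasDerivAt (fun u => ∫ s in (0 : ℝ)..u, B s) (B t) t :=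
    (hB.integral_hasStrictDerivAt 0 t).hasDerivAt
  have hE : Continuous fun u => Real.exp (∫ s in (0 : ℝ)..u, B s) := by fun_prop
  have hG : HasDerivAt (fun u => ∫ s in u..T, Real.exp (∫ r in (0 : ℝ)..s, B r))
      (-Real.exp (∫ s in (0 : ℝ)..t, B s)) t :=
    integral_hasDerivAt_left (hE.intervalIntegrable _ _) (hE.stronglyMeasurableAtFilter _ _)
      hE.continuousAt
  rw [funext (riccatiDenominator_eq_exp_neg_mul hB)]
  refine (hF.neg.exp.mul ((hG.const_mul D).const_add _)).congr_deriv ?_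
  simp only [Pi.neg_apply, Real.exp_neg]
  field_simp
  ring

end riccatiDenominator

theorem riccati_closed_form_unique_general (T : ℝ) (B : ℝ → ℝ)
    (hB : Continuous B) (D : ℝ) (hD : 0 < D) (z : ℝ → ℝ)
    (hzc : ContinuousOn z (Icc (0 : ℝ) T))
    (hz : ∀ t ∈ Icc (0 : ℝ) T, HasDerivAt z (B t * z t + (z t) ^ 2) t)
    (hzT : z T = D) :
    ∀ t ∈ Icc (0 : ℝ) T,
      z t = D * (Real.exp (∫ s in t..T, B s)
          + D * ∫ s in t..T, Real.exp (∫ r in t..s, B r))⁻¹ := by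
  set y : ℝ → ℝ := fun t => D * (riccatiDenominator B D T t)⁻¹
  have hy : ∀ t ∈ Icc (0 : ℝ) T, HasDerivAt y (B t * y t + y t ^ 2) t := fun t ht =>
    (hasDerivAt_riccatiDenominator hB t).const_mul_inv_riccati
      (riccatiDenominator_pos hD.le ht.2).ne'
  exact riccati_eqOn_of_eq_right hB.continuousOn hzc hz
    (fun t ht => (hy t ht).continuousAt.continuousWithinAt) hy (by simp [hzT])

/-- Uniqueness for the Riccati terminal value problem: if `z` is continuous on
`[0, T]`, differentiable at every `t ∈ [0, T]` with `z' = B(t)·z + z²`, and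
`z(T) = D > 0`, then `z` coincides on `[0, T]` with the closed-form solution
`t ↦ D·(exp(∫_t^T B) + D·∫_t^T exp(∫_t^s B) ds)⁻¹`. -/
theorem riccati_closed_form_unique (T : ℝ) (hT : 0 < T) (B : ℝ → ℝ)
    (hB : Continuous B) (D : ℝ) (hD : 0 < D) (z : ℝ → ℝ)
    (hzc : ContinuousOn z (Icc (0 : ℝ) T))
    (hz : ∀ t ∈ Icc (0 : ℝ) T, HasDerivAt z (B t * z t + (z t) ^ 2) t)
    (hzT : z T = D) :
    ∀ t ∈ Icc (0 : ℝ) T,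
      z t = D * (Real.exp (∫ s in t..T, B s)
          + D * ∫ s in t..T, Real.exp (∫ r in t..s, B r))⁻¹ :=
  riccati_closed_form_unique_general T B hB D hD z hzc hz hzT
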